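/- For every function f ∈ L¹(ℝ²), the set G_f = {s ∈ [0,π/2) : the set {x ∈ ℝ² : D̄_s f(x) = ∞} has positive Lebesgue measure} is a G_δσ set in [0,π/2), i.e. a countable union of sets each of which is G_δ in [0,π/2). -/

import Mathlib

/-!
The set where `D̄_s f = ∞` is `⋂ n, U_n(s)`, where `U_n(s)` is the union of the slope-`s`
rectangles of diameter `< 1/(n+1)` on which `f` averages more than `n`. Such a rectangle still
contains the same point, is still small and still has a large average after a small change of
slope: its boundary is null, so its integral of `f` moves continuously by dominated convergence.
Hence `x ∈ U_n(s)` is an open condition on `s`, and `s ↦ μ (U_n(s))` is lower semicontinuous for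
every measure `μ`. As the `U_n(s)` decrease, `|⋂ n, U_n(s)| > 0` iff for some piece `S_m` of a
finite-measure exhaustion of the plane and some `j`, `|U_n(s) ∩ S_m| > 1/j` for every `n`; for
fixed `m, j` this is a countable intersection of open conditions on `s`.
-/

open MeasureTheory Filter Set Real
open scoped ENNReal

noncomputable section

/-- Rotation of the plane about the origin by angle `s`. -/
def rot (s : ℝ) (p : ℝ × ℝ) : ℝ × ℝ :=
  (p.1 * Real.cos s - p.2 * Real.sin s, p.1 * Real.sin s + p.2 * Real.cos s)

/-- The open rectangle with slope `s`, corner `c` and side lengths `a`, `b`. -/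
def rect (s : ℝ) (c : ℝ × ℝ) (a b : ℝ) : Set (ℝ × ℝ) :=
  (fun p => c + rot s p) '' (Set.Ioo 0 a ×ˢ Set.Ioo 0 b)

/-- `R` is an open rectangle with slope `s` whose side lengths satisfy `P`. -/
def IsRectWith (s : ℝ) (P : ℝ → Prop) (R : Set (ℝ × ℝ)) : Prop :=
  ∃ c a b, 0 < a ∧ 0 < b ∧ P a ∧ P b ∧ R = rect s c a b

/-- `R` is an open rectangle with slope `s`. -/
def IsRect (s : ℝ) (R : Set (ℝ × ℝ)) : Prop :=
  IsRectWith s (fun _ => True) R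

/-- Average of `f` over the set `R`. -/
def avg (f : ℝ × ℝ → ℝ) (R : Set (ℝ × ℝ)) : ℝ :=
  (∫ p in R, f p) / (volume R).toReal

/-- The filter of slope-`s` rectangles containing `x` with diameters shrinking to `0`. -/
def rectFilter (s : ℝ) (x : ℝ × ℝ) : Filter (Set (ℝ × ℝ)) :=
  ⨅ d ∈ Set.Ioi (0 : ℝ), Filter.principal {R | IsRect s R ∧ x ∈ R ∧ Metric.diam R < d}

/-- The upper derivative `D̄_s f (x)`. -/
def upperDeriv (s : ℝ) (f : ℝ × ℝ → ℝ) (x : ℝ × ℝ) : EReal :=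
  Filter.limsup (fun R => (avg f R : EReal)) (rectFilter s x)

/-- The basis `R_s` differentiates the integral of `f`. -/
def Differentiates (s : ℝ) (f : ℝ × ℝ → ℝ) : Prop :=
  ∀ᵐ x : ℝ × ℝ, Filter.Tendsto (fun R => avg f R) (rectFilter s x) (nhds (f x))

/-- `S ⊆ [0, π/2)` is a `G_δ` set in `[0, π/2)`. -/
def IsGdeltaIn (S : Set ℝ) : Prop :=
  ∃ G : ℕ → Set ℝ, (∀ k, IsOpen (G k)) ∧ S = (⋂ k, G k) ∩ Set.Ico 0 (π / 2)

/-- `S` is a `G_δσ` set in `[0, π/2)`. -/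
def IsGdeltaSigmaIn (S : Set ℝ) : Prop :=
  ∃ F : ℕ → Set ℝ, (∀ n, IsGdeltaIn (F n)) ∧ S = ⋃ n, F n

/-- `S` is an `R`-set. -/
def IsRSet (S : Set ℝ) : Prop :=
  S ⊆ Set.Ico 0 (π / 2) ∧
    ∃ f : ℝ × ℝ → ℝ, Integrable f ∧
      (∀ s ∈ Set.Ico 0 (π / 2) \ S, Differentiates s f) ∧
      (∀ s ∈ S, ∀ᵐ x : ℝ × ℝ, upperDeriv s f x = ⊤)

/-- `S` is a `WR`-set. -/
def IsWRSet (S : Set ℝ) : Prop :=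
  S ⊆ Set.Ico 0 (π / 2) ∧
    ∃ f : ℝ × ℝ → ℝ, Integrable f ∧
      (∀ s ∈ Set.Ico 0 (π / 2) \ S, Differentiates s f) ∧
      (∀ s ∈ S, 0 < volume {x : ℝ × ℝ | upperDeriv s f x = ⊤})

/-- The grid square `Q_k^n` of side `1/n`. -/
def gridSq (n : ℕ) (k : ℤ × ℤ) : Set (ℝ × ℝ) :=
  (fun x : ℝ × ℝ => ((n : ℝ))⁻¹ • (((k.1 : ℝ), (k.2 : ℝ)) + x)) ''
    (Set.Ico (-(1 : ℝ)/2) (1/2) ×ˢ Set.Ico (-(1 : ℝ)/2) (1/2))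

/-- `mes_* A = inf_k |A ∩ Q_k|`. -/
def mesLow (A : Set (ℝ × ℝ)) : ℝ :=
  ⨅ k : ℤ × ℤ, (volume (A ∩ gridSq 1 k)).toReal

/-- `mes^* A = sup_k |A ∩ Q_k|`. -/
def mesUp (A : Set (ℝ × ℝ)) : ℝ :=
  ⨆ k : ℤ × ℤ, (volume (A ∩ gridSq 1 k)).toReal

/-- `dil_n A = {x : n x ∈ A}`. -/
def dil (n : ℕ) (A : Set (ℝ × ℝ)) : Set (ℝ × ℝ) :=
  {x : ℝ × ℝ | (n : ℝ) • x ∈ A}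

/-- `A` is a `δ`-set with respect to the slope `s`: a union of mutually disjoint
rectangles of slope `s` with both side lengths `≥ δ`. -/
def IsDeltaSet (s δ : ℝ) (A : Set (ℝ × ℝ)) : Prop :=
  ∃ (ι : Type) (R : ι → Set (ℝ × ℝ)),
    (∀ i, IsRectWith s (fun a => δ ≤ a) (R i)) ∧
      Pairwise (Function.onFun Disjoint R) ∧ A = ⋃ i, R i

/-- The maximal function over slope-`s` rectangles whose side lengths satisfy `P`. -/
def maxFn (s : ℝ) (P : ℝ → Prop) (f : ℝ × ℝ → ℝ) (x : ℝ × ℝ) : ℝ≥0∞ :=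
  ⨆ (R : Set (ℝ × ℝ)) (_ : IsRectWith s P R ∧ x ∈ R),
    ENNReal.ofReal (|∫ p in R, f p| / (volume R).toReal)

/-- The points `θ_k`, `k = ±1, ±2, …`. -/
def theta (ε γ : ℝ) (k : ℤ) : ℝ × ℝ :=
  (ε / 2 ^ k.natAbs, (k.sign : ℝ) * Real.tan γ * ε / 2 ^ k.natAbs)

/-- The strip `Γ_s(ε)`. -/
def strip (s ε : ℝ) : Set (ℝ × ℝ) :=
  rot s '' {x : ℝ × ℝ | |x.2| < ε}

/-- The Euclidean ball `B(ε)` in the plane. -/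
def euclBall (ε : ℝ) : Set (ℝ × ℝ) :=
  {x : ℝ × ℝ | Real.sqrt (x.1 ^ 2 + x.2 ^ 2) ≤ ε}

open scoped Topology

section Rotation

def rotL (s : ℝ) : (ℝ × ℝ) →ₗ[ℝ] ℝ × ℝ where
  toFun := rot s
  map_add' p q := by simp only [rot, Prod.fst_add, Prod.snd_add, Prod.mk_add_mk]; ring_nf
  map_smul' r p := by
    simp only [rot, Prod.smul_fst, Prod.smul_snd, smul_eq_mul, RingHom.id_apply, Prod.smul_mk]
    ring_nf

theorem coe_rotL (s : ℝ) : ⇑(rotL s) = rot s := rfl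

theorem det_rotL (s : ℝ) : LinearMap.det (rotL s) = 1 := by
  rw [← LinearMap.det_toMatrix (Module.Basis.finTwoProd ℝ), Matrix.det_fin_two]
  simpa [LinearMap.toMatrix_apply, rotL, rot, sq] using Real.cos_sq_add_sin_sq s

theorem continuous_rot (s : ℝ) : Continuous (rot s) := by
  unfold rot; fun_prop

theorem rot_rot (s t : ℝ) (p : ℝ × ℝ) : rot s (rot t p) = rot (s + t) p := by
  simp only [rot, Real.cos_add, Real.sin_add, Prod.mk.injEq]; constructor <;> ring

theorem rot_zero (p : ℝ × ℝ) : rot 0 p = p := by simp [rot]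

theorem rot_neg_rot (s : ℝ) (p : ℝ × ℝ) : rot (-s) (rot s p) = p := by
  rw [rot_rot, neg_add_cancel, rot_zero]

theorem rot_rot_neg (s : ℝ) (p : ℝ × ℝ) : rot s (rot (-s) p) = p := by
  simpa using rot_neg_rot (-s) p

theorem measurePreserving_rot (s : ℝ) : MeasurePreserving (rot s) := by
  refine ⟨(continuous_rot s).measurable, ?_⟩
  rw [← coe_rotL, Measure.map_linearMap_addHaar_eq_smul_addHaar _ (by simp [det_rotL])]
  simp [det_rotL]

theorem measurePreserving_rot_neg_sub (s : ℝ) (c : ℝ × ℝ) :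
    MeasurePreserving (fun x : ℝ × ℝ => rot (-s) (x - c)) :=
  (measurePreserving_rot (-s)).comp (measurePreserving_sub_right volume c)

theorem continuous_rot_neg_sub (x c : ℝ × ℝ) : Continuous fun s' : ℝ => rot (-s') (x - c) := by
  unfold rot; fun_prop

theorem dist_rot_rot_le (s s' : ℝ) (p : ℝ × ℝ) :
    dist (rot s' p) (rot s p) ≤ (|p.1| + |p.2|) * |s' - s| := by
  have hc := Real.abs_cos_sub_cos_le s' s
  have hs := Real.abs_sin_sub_sin_le s' s
  have h1 := abs_nonneg p.1
  have h2 := abs_nonneg p.2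
  rw [Prod.dist_eq, Real.dist_eq, Real.dist_eq]
  refine max_le ?_ ?_
  · calc |(rot s' p).1 - (rot s p).1|
          = |p.1 * (Real.cos s' - Real.cos s) - p.2 * (Real.sin s' - Real.sin s)| := by
            simp only [rot]; ring_nf
      _ ≤ |p.1| * |Real.cos s' - Real.cos s| + |p.2| * |Real.sin s' - Real.sin s| := by
            rw [← abs_mul, ← abs_mul]; exact abs_sub _ _
      _ ≤ (|p.1| + |p.2|) * |s' - s| := by nlinarith
  · calc |(rot s' p).2 - (rot s p).2|
          = |p.1 * (Real.sin s' - Real.sin s) + p.2 * (Real.cos s' - Real.cos s)| := by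
            simp only [rot]; ring_nf
      _ ≤ |p.1| * |Real.sin s' - Real.sin s| + |p.2| * |Real.cos s' - Real.cos s| := by
            rw [← abs_mul, ← abs_mul]; exact abs_add_le _ _
      _ ≤ (|p.1| + |p.2|) * |s' - s| := by nlinarith

end Rotation

section Rectangle

variable {s : ℝ} {c : ℝ × ℝ} {a b : ℝ}

theorem mem_rect_iff {x : ℝ × ℝ} :
    x ∈ rect s c a b ↔ rot (-s) (x - c) ∈ Ioo 0 a ×ˢ Ioo 0 b := by
  constructor
  · rintro ⟨p, hp, rfl⟩
    simpa [rot_neg_rot] using hp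
  · exact fun h => ⟨_, h, by simp [rot_rot_neg]⟩

theorem rect_eq_preimage :
    rect s c a b = (fun x => rot (-s) (x - c)) ⁻¹' (Ioo 0 a ×ˢ Ioo 0 b) :=
  Set.ext fun _ => mem_rect_iff

theorem isOpen_rect : IsOpen (rect s c a b) := by
  rw [rect_eq_preimage]
  exact (isOpen_Ioo.prod isOpen_Ioo).preimage (by unfold rot; fun_prop)

theorem volume_rect : volume (rect s c a b) = volume (Ioo 0 a ×ˢ Ioo 0 b) := by
  rw [rect_eq_preimage, (measurePreserving_rot_neg_sub s c).measure_preimage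
    (measurableSet_Ioo.prod measurableSet_Ioo).nullMeasurableSet]

theorem isBounded_rect : Bornology.IsBounded (rect s c a b) := by
  refine (IsCompact.isBounded ?_).subset
    (image_mono (prod_mono Ioo_subset_Icc_self Ioo_subset_Icc_self))
  exact (isCompact_Icc.prod isCompact_Icc).image (by unfold rot; fun_prop)

theorem rect_subset_cthickening (s' : ℝ) :
    rect s' c a b ⊆ Metric.cthickening ((a + b) * |s' - s|) (rect s c a b) := by
  rintro _ ⟨p, hp, rfl⟩
  refine Metric.mem_cthickening_of_dist_le _ (c + rot s p) _ _ ⟨p, hp, rfl⟩ ?_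
  rw [dist_add_left]
  obtain ⟨⟨h1, h2⟩, h3, h4⟩ := hp
  refine (dist_rot_rot_le s s' p).trans (mul_le_mul_of_nonneg_right ?_ (abs_nonneg _))
  rw [abs_of_pos h1, abs_of_pos h3]
  linarith

theorem eventually_diam_rect_lt {d : ℝ} (ha : 0 ≤ a) (hb : 0 ≤ b)
    (h : Metric.diam (rect s c a b) < d) :
    ∀ᶠ s' in 𝓝 s, Metric.diam (rect s' c a b) < d := by
  have hcont : Continuous fun s' : ℝ => Metric.diam (rect s c a b) + 2 * ((a + b) * |s' - s|) := by
    fun_prop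
  filter_upwards [hcont.continuousAt.eventually_lt continuousAt_const (by simpa using h)]
    with s' hs'
  have hε : 0 ≤ (a + b) * |s' - s| := by positivity
  calc Metric.diam (rect s' c a b)
      ≤ Metric.diam (Metric.cthickening ((a + b) * |s' - s|) (rect s c a b)) :=
        Metric.diam_mono (rect_subset_cthickening s') (isBounded_rect.cthickening)
    _ ≤ Metric.diam (rect s c a b) + 2 * ((a + b) * |s' - s|) :=
        Metric.diam_cthickening_le _ hε
    _ < d := hs'

theorem eventually_mem_rect {x : ℝ × ℝ} (hx : x ∈ rect s c a b) :
    ∀ᶠ s' in 𝓝 s, x ∈ rect s' c a b := by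
  rw [mem_rect_iff] at hx
  simp_rw [mem_rect_iff]
  exact (continuous_rot_neg_sub x c).continuousAt.eventually_mem
    ((isOpen_Ioo.prod isOpen_Ioo).mem_nhds hx)

theorem ae_tendsto_indicator_rect (f : ℝ × ℝ → ℝ) :
    ∀ᵐ x, Tendsto (fun s' => (rect s' c a b).indicator f x) (𝓝 s)
      (𝓝 ((rect s c a b).indicator f x)) := by
  set box : Set (ℝ × ℝ) := Ioo 0 a ×ˢ Ioo 0 b
  have hnull : volume ((fun x => rot (-s) (x - c)) ⁻¹' frontier box) = 0 := by
    rw [(measurePreserving_rot_neg_sub s c).measure_preimage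
      isClosed_frontier.measurableSet.nullMeasurableSet]
    exact ((convex_Ioo 0 a).prod (convex_Ioo 0 b)).addHaar_frontier volume
  filter_upwards [measure_eq_zero_iff_ae_notMem.mp hnull] with x hx
  have hind : ∀ s', (rect s' c a b).indicator f x
      = box.indicator (fun _ => f x) (rot (-s') (x - c)) := fun s' => by
    simp only [indicator, mem_rect_iff, box]
  simp only [hind]
  exact (ContinuousAt.comp (f := fun s' => rot (-s') (x - c))
    (continuousOn_const.continuousAt_indicator hx)
    (continuous_rot_neg_sub x c).continuousAt).tendsto

theorem tendsto_setIntegral_rect {f : ℝ × ℝ → ℝ} (hf : Integrable f) :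
    Tendsto (fun s' => ∫ p in rect s' c a b, f p) (𝓝 s) (𝓝 (∫ p in rect s c a b, f p)) := by
  simp only [← integral_indicator isOpen_rect.measurableSet]
  refine tendsto_integral_filter_of_dominated_convergence (fun x => ‖f x‖)
    (Eventually.of_forall fun _ => hf.aestronglyMeasurable.indicator isOpen_rect.measurableSet)
    (Eventually.of_forall fun _ => Eventually.of_forall fun _ => norm_indicator_le_norm_self _ _)
    hf.norm (ae_tendsto_indicator_rect f)

theorem tendsto_avg_rect {f : ℝ × ℝ → ℝ} (hf : Integrable f) :
    Tendsto (fun s' => avg f (rect s' c a b)) (𝓝 s) (𝓝 (avg f (rect s c a b))) := by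
  simp only [avg, volume_rect]
  exact (tendsto_setIntegral_rect hf).div_const _

end Rectangle

section Measure

variable {α : Type*} [MeasurableSpace α] {μ : Measure α}

theorem lowerSemicontinuous_measure_of_isOpen_setOf_mem {X : Type*} [TopologicalSpace X]
    [FirstCountableTopology X] {U : X → Set α} (hU : ∀ x, IsOpen {s | x ∈ U s}) :
    LowerSemicontinuous fun s => μ (U s) := by
  intro s t ht
  obtain ⟨V, hV⟩ := (𝓝 s).exists_antitone_basis
  -- The sets `A k` need not be measurable: continuity from below holds for arbitrary sets.
  set A : ℕ → Set α := fun k => {x | ∀ s' ∈ V k, x ∈ U s'}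
  have hA : Monotone A := fun k l hkl x hx s' hs' => hx s' (hV.antitone hkl hs')
  have hUA : U s ⊆ ⋃ k, A k := fun x hx => by
    obtain ⟨k, hk⟩ := hV.mem_iff.mp ((hU x).mem_nhds hx)
    exact mem_iUnion.mpr ⟨k, hk⟩
  obtain ⟨k, hk⟩ := lt_iSup_iff.mp (ht.trans_le ((measure_mono hUA).trans_eq hA.measure_iUnion))
  filter_upwards [hV.mem k] with s' hs'
  exact hk.trans_le (measure_mono fun x hx => hx s' hs')

theorem pos_measure_iff_exists_restrict_spanningSets [SigmaFinite μ] {t : Set α} :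
    0 < μ t ↔ ∃ m, 0 < μ.restrict (spanningSets μ m) t := by
  simp only [pos_iff_ne_zero, Measure.restrict_apply' (measurableSet_spanningSets μ _)]
  rw [← not_forall, ← measure_iUnion_null_iff, ← inter_iUnion, iUnion_spanningSets, inter_univ]

instance isFiniteMeasure_restrict_spanningSets [SigmaFinite μ] (m : ℕ) :
    IsFiniteMeasure (μ.restrict (spanningSets μ m)) :=
  isFiniteMeasure_restrict.2 (measure_spanningSets_lt_top μ m).ne

theorem Antitone.pos_measure_iInter_iff [IsFiniteMeasure μ] {U : ℕ → Set α} (hU : Antitone U)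
    (hmeas : ∀ n, NullMeasurableSet (U n) μ) :
    0 < μ (⋂ n, U n) ↔ ∃ j : ℕ, ∀ n, (j : ℝ≥0∞)⁻¹ < μ (U n) := by
  constructor
  · intro h
    obtain ⟨j, hj⟩ := ENNReal.exists_inv_nat_lt h.ne'
    exact ⟨j, fun n => hj.trans_le (measure_mono (iInter_subset U n))⟩
  · rintro ⟨j, hj⟩
    rw [hU.measure_iInter hmeas ⟨0, measure_ne_top μ _⟩]
    exact (ENNReal.inv_pos.mpr (ENNReal.natCast_ne_top j)).trans_le (le_iInf fun n => (hj n).le)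

end Measure

section LargeAverage

def largeAverageSet (f : ℝ × ℝ → ℝ) (s : ℝ) (n : ℕ) : Set (ℝ × ℝ) :=
  {x | ∃ R, IsRect s R ∧ x ∈ R ∧ Metric.diam R < ((n : ℝ) + 1)⁻¹ ∧ (n : ℝ) < avg f R}

variable {f : ℝ × ℝ → ℝ} {s : ℝ}

theorem antitone_largeAverageSet : Antitone (largeAverageSet f s) := by
  intro m n hmn x ⟨R, hR, hxR, hdiam, havg⟩
  have hmn' : (m : ℝ) ≤ n := Nat.cast_le.mpr hmn
  refine ⟨R, hR, hxR, hdiam.trans_le ?_, hmn'.trans_lt havg⟩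
  gcongr

theorem isOpen_largeAverageSet (n : ℕ) : IsOpen (largeAverageSet f s n) := by
  refine isOpen_iff_mem_nhds.mpr fun x ⟨R, hR, hxR, hdiam, havg⟩ => ?_
  have hRopen : IsOpen R := by
    obtain ⟨c, a, b, -, -, -, -, rfl⟩ := hR
    exact isOpen_rect
  exact mem_of_superset (hRopen.mem_nhds hxR) fun y hy => ⟨R, hR, hy, hdiam, havg⟩

theorem hasBasis_rectFilter (s : ℝ) (x : ℝ × ℝ) :
    (rectFilter s x).HasBasis (fun d : ℝ => 0 < d)
      fun d => {R | IsRect s R ∧ x ∈ R ∧ Metric.diam R < d} := by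
  refine hasBasis_biInf_principal (fun d₁ h₁ d₂ h₂ => ?_) nonempty_Ioi
  exact ⟨min d₁ d₂, mem_Ioi.mpr (lt_min h₁ h₂),
    fun R hR => ⟨hR.1, hR.2.1, hR.2.2.trans_le (min_le_left _ _)⟩,
    fun R hR => ⟨hR.1, hR.2.1, hR.2.2.trans_le (min_le_right _ _)⟩⟩

theorem upperDeriv_eq_top_iff {x : ℝ × ℝ} :
    upperDeriv s f x = ⊤ ↔ ∀ n, x ∈ largeAverageSet f s n := by
  constructor
  · intro h n
    have : ∃ᶠ R in rectFilter s x, ((n : ℝ) : EReal) < avg f R :=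
      frequently_lt_of_lt_limsup (by isBoundedDefault) ((EReal.coe_lt_top _).trans_eq h.symm)
    obtain ⟨R, ⟨hR, hxR, hdiam⟩, havg⟩ :=
      (hasBasis_rectFilter s x).frequently_iff.mp this ((n : ℝ) + 1)⁻¹ (by positivity)
    exact ⟨R, hR, hxR, hdiam, EReal.coe_lt_coe_iff.mp havg⟩
  · intro h
    refine (EReal.eq_top_iff_forall_lt _).mpr fun r => ?_
    obtain ⟨n, hn⟩ := exists_nat_gt r
    refine (EReal.coe_lt_coe_iff.mpr hn).trans_le (le_limsup_of_frequently_le' ?_)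
    refine (hasBasis_rectFilter s x).frequently_iff.mpr fun d hd => ?_
    obtain ⟨k, hk⟩ := exists_nat_one_div_lt hd
    obtain ⟨R, hR, hxR, hdiam, havg⟩ := h (max n k)
    have hdiam' : Metric.diam R < d := hdiam.trans_le (by rw [← one_div]; gcongr; simp) |>.trans hk
    exact ⟨R, ⟨hR, hxR, hdiam'⟩,
      EReal.coe_le_coe_iff.mpr ((Nat.cast_le.mpr (le_max_left n k)).trans havg.le)⟩

theorem setOf_upperDeriv_eq_top (s : ℝ) (f : ℝ × ℝ → ℝ) :
    {x | upperDeriv s f x = ⊤} = ⋂ n, largeAverageSet f s n := by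
  ext x
  exact upperDeriv_eq_top_iff.trans mem_iInter.symm

theorem isOpen_setOf_mem_largeAverageSet (hf : Integrable f) (n : ℕ) (x : ℝ × ℝ) :
    IsOpen {s | x ∈ largeAverageSet f s n} := by
  refine isOpen_iff_mem_nhds.mpr fun s ⟨R, hR, hxR, hdiam, havg⟩ => ?_
  obtain ⟨c, a, b, ha, hb, -, -, rfl⟩ := hR
  filter_upwards [eventually_mem_rect hxR, eventually_diam_rect_lt ha.le hb.le hdiam,
    (tendsto_avg_rect hf).eventually_const_lt havg] with s' hx hdiam' havg'
  exact ⟨_, ⟨c, a, b, ha, hb, trivial, trivial, rfl⟩, hx, hdiam', havg'⟩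

theorem lowerSemicontinuous_measure_largeAverageSet (hf : Integrable f) (μ : Measure (ℝ × ℝ))
    (n : ℕ) : LowerSemicontinuous fun s => μ (largeAverageSet f s n) :=
  lowerSemicontinuous_measure_of_isOpen_setOf_mem (isOpen_setOf_mem_largeAverageSet hf n)

end LargeAverage

theorem isGdeltaSigmaIn_iUnion₂ {F : ℕ → ℕ → Set ℝ} (hF : ∀ m j, IsGdeltaIn (F m j)) :
    IsGdeltaSigmaIn (⋃ m, ⋃ j, F m j) :=
  ⟨fun k => F k.unpair.1 k.unpair.2, fun _ => hF _ _, (Set.iUnion_unpair F).symm⟩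

/-- for every `f ∈ L¹(ℝ²)`, the set `G_f` of slopes `s ∈ [0, π/2)` for which
`{x : D̄_s f (x) = ∞}` has positive Lebesgue measure is a `G_δσ` set in `[0, π/2)`. -/
theorem gdeltasigma_of_pos_measure_infinite_upperDeriv (f : ℝ × ℝ → ℝ) (hf : Integrable f) :
    IsGdeltaSigmaIn
      {s : ℝ | s ∈ Set.Ico 0 (π / 2) ∧ 0 < volume {x : ℝ × ℝ | upperDeriv s f x = ⊤}} := by
  set μ : ℕ → Measure (ℝ × ℝ) := fun m => volume.restrict (spanningSets volume m)
  set G : ℕ → ℕ → ℕ → Set ℝ := fun m j n => {s | (j : ℝ≥0∞)⁻¹ < μ m (largeAverageSet f s n)}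
  have hG : ∀ m j n, IsOpen (G m j n) := fun m j n =>
    (lowerSemicontinuous_measure_largeAverageSet hf (μ m) n).isOpen_preimage _
  have hpos : ∀ s, 0 < volume {x | upperDeriv s f x = ⊤} ↔ ∃ m j, ∀ n, s ∈ G m j n := by
    intro s
    rw [setOf_upperDeriv_eq_top, pos_measure_iff_exists_restrict_spanningSets]
    exact exists_congr fun m => antitone_largeAverageSet.pos_measure_iInter_iff
      fun n => isOpen_largeAverageSet n |>.measurableSet.nullMeasurableSet
  convert isGdeltaSigmaIn_iUnion₂ fun m j => ⟨G m j, hG m j, rfl⟩ using 1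
  ext s
  simp only [mem_ofPred_eq, hpos, mem_iUnion, mem_inter_iff, mem_iInter]
  tauto

end
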